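/- Let G=(V,E) be a finite simple connected graph with unit shortest-path distance d and let 0 < p < |V|. Then G has a dominating set of size at most p if and only if there exists V' ⊆ V with |V'| = p and £C(V') + £M(V') ≤ |V| − p + 1. -/

import Mathlib

open Finset

/-- Distance from a vertex to a finite set of vertices (shortest-path graph distance). -/
noncomputable def distToSet {V : Type*} (G : SimpleGraph V) (v : V) (Z : Finset V) : ℕ :=
  sInf ((fun z => G.dist v z) '' ↑Z)

/-!
Put `f v = distToSet G v V'`. For a nonempty `V'` in a connected graph, `f` vanishes exactly on
`V'`, so `∑ v, f v ≥ |V| - |V'|`, with equality when `V'` dominates (then `f ≤ 1`). Hence a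
dominating `V'` of size `p` gives `max f + ∑ f ≤ 1 + (|V| - p)`, and a dominating set of size at
most `p` can be enlarged to one of size exactly `p`. Conversely, if `V'` does not dominate then
`max f ≥ 2`, and the bound `max f + ∑ f ≤ |V| - p + 1` fails.
-/

namespace SimpleGraph

variable {V : Type*} (G : SimpleGraph V)

def IsDominating (Z : Finset V) : Prop :=
  ∀ v, v ∉ Z → ∃ z ∈ Z, G.Adj v z

variable {G}

theorem IsDominating.mono {Z W : Finset V} (hZ : G.IsDominating Z) (hZW : Z ⊆ W) :
    G.IsDominating W := fun v hv => by
  obtain ⟨z, hz, hvz⟩ := hZ v fun h => hv (hZW h)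
  exact ⟨z, hZW hz, hvz⟩

theorem distToSet_le_dist (v : V) {Z : Finset V} {z : V} (hz : z ∈ Z) :
    distToSet G v Z ≤ G.dist v z :=
  Nat.sInf_le ⟨z, hz, rfl⟩

theorem exists_dist_eq_distToSet (v : V) {Z : Finset V} (hZ : Z.Nonempty) :
    ∃ z ∈ Z, G.dist v z = distToSet G v Z :=
  Nat.sInf_mem ((coe_nonempty.2 hZ).image _)

theorem distToSet_eq_zero_of_mem {v : V} {Z : Finset V} (hv : v ∈ Z) : distToSet G v Z = 0 :=
  Nat.eq_zero_of_le_zero <| dist_self (G := G) ▸ distToSet_le_dist v hv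

theorem IsDominating.distToSet_le_one {Z : Finset V} (hZ : G.IsDominating Z) (v : V) :
    distToSet G v Z ≤ 1 := by
  by_cases hv : v ∈ Z
  · exact (distToSet_eq_zero_of_mem hv).trans_le zero_le_one
  · obtain ⟨z, hz, hvz⟩ := hZ v hv
    exact dist_eq_one_iff_adj.2 hvz ▸ distToSet_le_dist v hz

theorem Connected.one_le_distToSet (hconn : G.Connected) {Z : Finset V} (hZ : Z.Nonempty)
    {v : V} (hv : v ∉ Z) : 1 ≤ distToSet G v Z := by
  obtain ⟨z, hz, hdist⟩ := exists_dist_eq_distToSet v hZ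
  exact hdist ▸ hconn.pos_dist_of_ne fun hvz => hv (hvz ▸ hz)

theorem Connected.isDominating_of_distToSet_le_one (hconn : G.Connected) {Z : Finset V}
    (hZ : Z.Nonempty) (h : ∀ v, distToSet G v Z ≤ 1) : G.IsDominating Z := by
  intro v hv
  obtain ⟨z, hz, hdist⟩ := exists_dist_eq_distToSet v hZ
  have hpos : 1 ≤ G.dist v z := hdist ▸ hconn.one_le_distToSet hZ hv
  exact ⟨z, hz, dist_eq_one_iff_adj.1 (le_antisymm (hdist ▸ h v) hpos)⟩

variable [Fintype V] [DecidableEq V]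

theorem IsDominating.sum_distToSet_le {Z : Finset V} (hZ : G.IsDominating Z) :
    ∑ v, distToSet G v Z ≤ Fintype.card V - #Z := by
  rw [← sum_add_sum_compl Z, sum_eq_zero fun v => distToSet_eq_zero_of_mem, zero_add,
    ← card_compl]
  exact card_eq_sum_ones Zᶜ ▸ sum_le_sum fun v _ => hZ.distToSet_le_one v

theorem Connected.card_sub_card_le_sum_distToSet (hconn : G.Connected) {Z : Finset V}
    (hZ : Z.Nonempty) : Fintype.card V - #Z ≤ ∑ v, distToSet G v Z := by
  rw [← sum_add_sum_compl Z, sum_eq_zero fun v => distToSet_eq_zero_of_mem, zero_add,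
    ← card_compl, card_eq_sum_ones]
  exact sum_le_sum fun v hv => hconn.one_le_distToSet hZ (mem_compl.1 hv)

end SimpleGraph

theorem stmt2_general {V : Type*} [Fintype V] [DecidableEq V]
    (G : SimpleGraph V) (hconn : G.Connected)
    (p : ℕ) (hp : 0 < p) (hpV : p < Fintype.card V) :
    (∃ Z : Finset V, Z.Nonempty ∧ Z.card ≤ p ∧ ∀ v : V, v ∉ Z → ∃ z ∈ Z, G.Adj v z) ↔
    (∃ V' : Finset V, V'.card = p ∧
      Finset.univ.sup (fun v => distToSet G v V') +
        ∑ v : V, distToSet G v V' ≤ Fintype.card V - p + 1) := by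
  constructor
  · rintro ⟨Z, -, hZp, hZ⟩
    obtain ⟨V', hZV', -, rfl⟩ :=
      exists_subsuperset_card_eq (subset_univ Z) hZp (by simpa using hpV.le)
    have hV' : G.IsDominating V' := SimpleGraph.IsDominating.mono hZ hZV'
    have hsup := Finset.sup_le_iff.2 fun v (_ : v ∈ univ) => hV'.distToSet_le_one v
    have hsum := hV'.sum_distToSet_le
    exact ⟨V', rfl, by omega⟩
  · rintro ⟨V', rfl, hbound⟩
    have hV' : V'.Nonempty := card_pos.1 hp
    refine ⟨V', hV', le_rfl, hconn.isDominating_of_distToSet_le_one hV' fun v => ?_⟩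
    have hsup := le_sup (f := fun v => distToSet G v V') (mem_univ v)
    have hsum := hconn.card_sub_card_le_sum_distToSet hV'
    omega

theorem stmt2 {V : Type*} [Fintype V] [DecidableEq V] [Nonempty V]
    (G : SimpleGraph V) (hconn : G.Connected)
    (p : ℕ) (hp : 0 < p) (hpV : p < Fintype.card V) :
    (∃ Z : Finset V, Z.Nonempty ∧ Z.card ≤ p ∧ ∀ v : V, v ∉ Z → ∃ z ∈ Z, G.Adj v z) ↔
    (∃ V' : Finset V, V'.card = p ∧
      Finset.univ.sup (fun v => distToSet G v V') +
        ∑ v : V, distToSet G v V' ≤ Fintype.card V - p + 1) :=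
  stmt2_general G hconn p hp hpV
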